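/- arXiv:1803.03414 — 3 statements merged into one kernel-verified Lean document; each statement's English description precedes it below -/
import Mathlib

section
/- For x ≥ 0, the standard Gaussian CDF satisfies Φ(-x) ≤ (1/2)·e^{-x²/2}, where Φ(x) = ∫_{-∞}^x e^{-t²/2}/√(2π) dt. -/
open MeasureTheory Set

/-- The standard normal CDF `Φ(x) = ∫_{-∞}^x e^{-t²/2}/√(2π) dt`. -/
noncomputable def gaussCDF (x : ℝ) : ℝ :=
  ∫ t in Set.Iic x, Real.exp (-t ^ 2 / 2) / Real.sqrt (2 * Real.pi)

lemma gauss_integrable : Integrable (fun t : ℝ => Real.exp (-t ^ 2 / 2)) := by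
  have h := integrable_exp_neg_mul_sq (by norm_num : (0:ℝ) < 1/2)
  convert h using 2 with t
  ring_nf

lemma gauss_total : ∫ t : ℝ, Real.exp (-t ^ 2 / 2) = Real.sqrt (2 * Real.pi) := by
  have h := integral_gaussian (1/2 : ℝ)
  have : (fun t : ℝ => Real.exp (-t ^ 2 / 2)) = fun t : ℝ => Real.exp (-(1/2) * t ^ 2) := by
    funext t; ring_nf
  rw [this, h]
  rw [show Real.pi / (1/2) = 2 * Real.pi by ring]

lemma gaussCDF_zero : gaussCDF 0 = 1 / 2 := by
  have hint := gauss_integrable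
  have hsym : (∫ t in Iic (0:ℝ), Real.exp (-t ^ 2 / 2))
      = ∫ t in Ioi (0:ℝ), Real.exp (-t ^ 2 / 2) := by
    have := integral_comp_neg_Iic (0:ℝ) (fun t => Real.exp (-t ^ 2 / 2))
    simp only [neg_zero, neg_sq] at this ⊢
    exact this
  have hsum := intervalIntegral.integral_Iic_add_Ioi (b := (0:ℝ)) hint.integrableOn hint.integrableOn
  rw [gauss_total] at hsum
  have h0 : (∫ t in Iic (0:ℝ), Real.exp (-t ^ 2 / 2)) = Real.sqrt (2 * Real.pi) / 2 := by
    rw [hsym] at hsum ⊢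
    linarith
  have hπ : (0:ℝ) < Real.sqrt (2 * Real.pi) := Real.sqrt_pos.2 (by positivity)
  unfold gaussCDF
  rw [integral_div, h0]
  field_simp

/-- For `x ≥ 0`, `Φ(-x) ≤ (1/2)·e^{-x²/2}`. -/
theorem gaussCDF_neg_le (x : ℝ) (hx : 0 ≤ x) :
    gaussCDF (-x) ≤ (1 / 2) * Real.exp (-x ^ 2 / 2) := by
  have hπ : (0:ℝ) < Real.sqrt (2 * Real.pi) := Real.sqrt_pos.2 (by positivity)
  have hshift : Integrable (fun t : ℝ => Real.exp (-(t + x) ^ 2 / 2)) := by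
    exact ((measurePreserving_add_right (volume : Measure ℝ) x).integrable_comp_emb
      (Homeomorph.addRight x).measurableEmbedding).2 gauss_integrable
  have h1 : gaussCDF (-x) ≤ ∫ t in Iic (-x),
      Real.exp (-x ^ 2 / 2) * (Real.exp (-(t + x) ^ 2 / 2) / Real.sqrt (2 * Real.pi)) := by
    unfold gaussCDF
    apply setIntegral_mono_on
    · exact (gauss_integrable.div_const _).integrableOn
    · exact (((hshift.div_const _)).const_mul _).integrableOn
    · exact measurableSet_Iic
    · intro t ht
      simp only [mem_Iic] at ht
      rw [mul_div_assoc', div_le_div_iff_of_pos_right hπ, ← Real.exp_add]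
      apply Real.exp_le_exp.2
      nlinarith [mul_nonneg hx (neg_nonneg.2 (by linarith : x + t ≤ 0))]
  have h2 : (∫ t in Iic (-x),
      Real.exp (-x ^ 2 / 2) * (Real.exp (-(t + x) ^ 2 / 2) / Real.sqrt (2 * Real.pi)))
      = Real.exp (-x ^ 2 / 2) * gaussCDF 0 := by
    rw [integral_const_mul]
    congr 1
    have A : MeasurableEmbedding (fun u : ℝ => u + x) :=
      (Homeomorph.addRight x).measurableEmbedding
    have hmap := A.setIntegral_map (μ := (volume : Measure ℝ))
      (fun t => Real.exp (-t ^ 2 / 2) / Real.sqrt (2 * Real.pi)) (Iic (0:ℝ))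
    rw [map_add_right_eq_self] at hmap
    unfold gaussCDF
    rw [hmap]
    have : (fun u : ℝ => u + x) ⁻¹' Iic (0:ℝ) = Iic (-x) := by
      ext u
      simp only [mem_preimage, mem_Iic]
      constructor <;> intro h <;> linarith
    rw [this]
  rw [gaussCDF_zero] at h2
  calc gaussCDF (-x) ≤ _ := h1
    _ = Real.exp (-x ^ 2 / 2) * (1 / 2) := h2
    _ = (1 / 2) * Real.exp (-x ^ 2 / 2) := by ring
end

section
/- (Hayashi–Nagaoka inequality) Let S and T be positive semidefinite operators on a finite-dimensional Hilbert space with 0 ≤ S ≤ I, and let c > 0. Then I − (S+T)^{-1/2} S (S+T)^{-1/2} ≤ (1+c)(I−S) + (2+c+1/c)·T, where the inverse square root is taken on the support of S+T (generalized inverse). -/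
open Matrix BigOperators Classical ComplexOrder

noncomputable section

variable {n : Type*} [Fintype n] [DecidableEq n]

/-- positive-semidefinite square root, extended by 0. -/
noncomputable def msqrt (A : Matrix n n ℂ) : Matrix n n ℂ :=
  if h : A.PosSemidef then
    (h.1.eigenvectorUnitary : Matrix n n ℂ) * diagonal ((↑) ∘ Real.sqrt ∘ h.1.eigenvalues) *
      (star (h.1.eigenvectorUnitary : Matrix n n ℂ)) else 0

/-- trace norm ‖X‖₁ = Tr √(XᴴX). -/
noncomputable def traceNorm (X : Matrix n n ℂ) : ℝ :=
  (msqrt (Xᴴ * X)).trace.re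

/-- fidelity F(ρ,σ) = ‖√ρ√σ‖₁. -/
noncomputable def fidelity (ρ σ : Matrix n n ℂ) : ℝ :=
  traceNorm (msqrt ρ * msqrt σ)

/-- purified distance. -/
noncomputable def purifiedDist (ρ σ : Matrix n n ℂ) : ℝ :=
  Real.sqrt (1 - (fidelity ρ σ)^2)

def IsDensityMatrix (ρ : Matrix n n ℂ) : Prop := ρ.PosSemidef ∧ ρ.trace = 1

/-- max-relative entropy. -/
noncomputable def Dmax (ρ σ : Matrix n n ℂ) : ℝ :=
  sInf {l : ℝ | ((((2:ℝ)^l : ℝ) : ℂ) • σ - ρ).PosSemidef}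

/-- smooth hypothesis testing divergence. -/
noncomputable def DH (ε : ℝ) (ρ τ : Matrix n n ℂ) : ℝ :=
  sSup {r : ℝ | ∃ P : Matrix n n ℂ, P.PosSemidef ∧ ((1 : Matrix n n ℂ) - P).PosSemidef ∧
    1 - ε ≤ ((P * ρ).trace).re ∧ r = - Real.logb 2 ((P * τ).trace).re}

/-- functional calculus for hermitian matrices (0 otherwise). -/
noncomputable def hermCFC (f : ℝ → ℝ) (A : Matrix n n ℂ) : Matrix n n ℂ :=
  if h : A.IsHermitian then
    (Matrix.IsHermitian.eigenvectorUnitary h : Matrix n n ℂ) *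
      Matrix.diagonal (fun i => (f (h.eigenvalues i) : ℂ)) *
      (star (Matrix.IsHermitian.eigenvectorUnitary h : Matrix n n ℂ))
  else 0

/-- von Neumann entropy (base 2). -/
noncomputable def vnEntropy (ρ : Matrix n n ℂ) : ℝ :=
  if h : ρ.IsHermitian then -∑ i, (h.eigenvalues i) * Real.logb 2 (h.eigenvalues i) else 0

end

/-! With `P = (S+T)^{-1/2}`, `N = (S+T)^{1/2}` and `Y = P - 1`, one has the identity
`(1+c)(1-S) + (2+c+1/c)T - (1 - PSP)`
`  = c(1 - P(S+T)P) + c⁻¹(cY - 1)T(cY - 1) + (1+c)YSY + (2+2c)(N - S)`,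
which uses only `P(S+T) = (S+T)P = N`. Each summand on the right is positive: `P(S+T)P` is the
support projection of `S+T`, the middle two are conjugates of positive elements by selfadjoint ones, and
`S ≤ N` because `S² ≤ S ≤ S+T` and the square root is operator monotone. -/

section Ring

variable {A : Type*} [Ring A] [Algebra ℝ A]

theorem hayashi_nagaoka_identity {S T P N : A} (hPN : P * (S + T) = N) (hNP : (S + T) * P = N)
    {c : ℝ} (hc : c ≠ 0) :
    (1 + c) • (1 - S) + (2 + c + 1 / c) • T - (1 - P * S * P) =
      c • (1 - P * (S + T) * P) + c⁻¹ • ((c • (P - 1) - 1) * T * (c • (P - 1) - 1)) +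
        (1 + c) • ((P - 1) * S * (P - 1)) + (2 + 2 * c) • (N - S) := by
  have hPT : P * T = N - P * S := by rw [← hPN]; noncomm_ring
  have hTP : T * P = N - S * P := by rw [← hNP]; noncomm_ring
  simp only [mul_add, add_mul, mul_sub, sub_mul, smul_mul_assoc, mul_smul_comm, mul_one, one_mul,
    mul_assoc, hTP]
  simp only [← mul_assoc, hPT]
  match_scalars <;> field_simp <;> ring

end Ring

section StarOrderedRing

variable {A : Type*} [Ring A] [StarRing A] [PartialOrder A] [StarOrderedRing A] [Algebra ℝ A]
  [StarModule ℝ A]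

theorem hayashi_nagaoka_algebraic {S T P N : A} (hS : 0 ≤ S) (hT : 0 ≤ T)
    (hP : IsSelfAdjoint P) (hPN : P * (S + T) = N) (hNP : (S + T) * P = N)
    (hPP : P * (S + T) * P ≤ 1) (hSN : S ≤ N) {c : ℝ} (hc : 0 < c) :
    1 - P * S * P ≤ (1 + c) • (1 - S) + (2 + c + 1 / c) • T := by
  have hY : IsSelfAdjoint (P - 1) := hP.sub (.one A)
  have hX : IsSelfAdjoint (c • (P - 1) - 1) := ((IsSelfAdjoint.all c).smul hY).sub (.one A)
  rw [← sub_nonneg, hayashi_nagaoka_identity hPN hNP hc.ne']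
  have := sub_nonneg.2 hPP
  have := IsSelfAdjoint.conjugate_nonneg hT hX
  have := IsSelfAdjoint.conjugate_nonneg hS hY
  have := sub_nonneg.2 hSN
  have := hc.le
  positivity

end StarOrderedRing

theorem Real.inv_sqrt_mul_self (t : ℝ) : (√t)⁻¹ * t = √t := by
  rcases le_or_gt t 0 with ht | ht
  · simp [Real.sqrt_eq_zero'.2 ht]
  · rw [inv_mul_eq_div, Real.div_sqrt]

section CStarAlgebra

variable {A : Type*} [CStarAlgebra A] [PartialOrder A] [StarOrderedRing A]

theorem CFC.mul_self_le_self {a : A} (ha : 0 ≤ a) (ha1 : a ≤ 1) : a * a ≤ a := by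
  obtain ⟨r, hr, rfl⟩ : ∃ r, IsSelfAdjoint r ∧ r * r = a :=
    ⟨CFC.sqrt a, (CFC.sqrt_nonneg a).isSelfAdjoint, CFC.sqrt_mul_sqrt_self a ha⟩
  have h : r * r - r * r * (r * r) = r * (1 - r * r) * r := by noncomm_ring
  rw [← sub_nonneg, h]
  exact IsSelfAdjoint.conjugate_nonneg (sub_nonneg.2 ha1) hr

theorem CFC.le_sqrt_add {S T : A} (hS : 0 ≤ S) (hS1 : S ≤ 1) (hT : 0 ≤ T) :
    S ≤ CFC.sqrt (S + T) :=
  calc S = CFC.sqrt (S * S) := (CFC.sqrt_mul_self S hS).symm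
    _ ≤ CFC.sqrt (S + T) :=
      CFC.sqrt_le_sqrt _ _ ((CFC.mul_self_le_self hS hS1).trans (le_add_of_nonneg_right hT))

section InvSqrt

-- `(√t)⁻¹` is continuous on the spectrum iff `0` is not a limit of positive spectral values,
-- i.e. iff the generalized inverse square root is bounded; otherwise `cfc` returns its junk value `0`.
variable {a : A} (hcont : ContinuousOn (fun t : ℝ ↦ (√t)⁻¹) (spectrum ℝ a))
include hcont

theorem cfc_inv_sqrt_mul_self (ha : 0 ≤ a) : cfc (fun t : ℝ ↦ (√t)⁻¹) a * a = CFC.sqrt a :=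
  calc cfc (fun t : ℝ ↦ (√t)⁻¹) a * a = cfc (fun t : ℝ ↦ (√t)⁻¹) a * cfc (fun t : ℝ ↦ t) a := by
        rw [cfc_id' ℝ a]
    _ = cfc Real.sqrt a := by rw [← cfc_mul _ _ a hcont]; simp only [Real.inv_sqrt_mul_self]
    _ = CFC.sqrt a := by rw [CFC.sqrt_eq_real_sqrt a ha, cfcₙ_eq_cfc]

theorem mul_cfc_inv_sqrt (ha : 0 ≤ a) : a * cfc (fun t : ℝ ↦ (√t)⁻¹) a = CFC.sqrt a := by
  rw [← cfc_inv_sqrt_mul_self hcont ha]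
  simpa only [cfc_id' ℝ a] using (cfc_commute_cfc (R := ℝ) (fun t ↦ t) (fun t ↦ (√t)⁻¹) a).eq

theorem cfc_inv_sqrt_mul_mul_le_one (ha : 0 ≤ a) :
    cfc (fun t : ℝ ↦ (√t)⁻¹) a * a * cfc (fun t : ℝ ↦ (√t)⁻¹) a ≤ 1 :=
  calc cfc (fun t : ℝ ↦ (√t)⁻¹) a * a * cfc (fun t : ℝ ↦ (√t)⁻¹) a
      = cfc (fun t : ℝ ↦ (√t)⁻¹ * t * (√t)⁻¹) a := by
        rw [cfc_mul _ _ a (by fun_prop) hcont, cfc_mul _ _ a hcont, cfc_id' ℝ a]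
    _ ≤ 1 := cfc_le_one _ a fun t _ ↦ by simpa only [Real.inv_sqrt_mul_self] using mul_inv_le_one

end InvSqrt

theorem CStarAlgebra.hayashi_nagaoka {S T : A} (hS : 0 ≤ S) (hS1 : S ≤ 1) (hT : 0 ≤ T)
    (hcont : ContinuousOn (fun t : ℝ ↦ (√t)⁻¹) (spectrum ℝ (S + T))) {c : ℝ} (hc : 0 < c) :
    1 - cfc (fun t : ℝ ↦ (√t)⁻¹) (S + T) * S * cfc (fun t : ℝ ↦ (√t)⁻¹) (S + T) ≤
      (1 + c) • (1 - S) + (2 + c + 1 / c) • T := by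
  have hST : 0 ≤ S + T := add_nonneg hS hT
  exact hayashi_nagaoka_algebraic hS hT (cfc_predicate _ _) (cfc_inv_sqrt_mul_self hcont hST)
    (mul_cfc_inv_sqrt hcont hST) (cfc_inv_sqrt_mul_mul_le_one hcont hST)
    (CFC.le_sqrt_add hS hS1 hT) hc

end CStarAlgebra

theorem Real.ite_eq_zero_one_div_sqrt (t : ℝ) : (if t = 0 then 0 else 1 / √t) = (√t)⁻¹ := by
  split_ifs with ht <;> simp [ht]

theorem hermCFC_eq_cfc {n : Type*} [Fintype n] [DecidableEq n] (f : ℝ → ℝ) {A : Matrix n n ℂ}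
    (hA : A.IsHermitian) : hermCFC f A = cfc f A := by
  rw [hermCFC, dif_pos hA, hA.cfc_eq, IsHermitian.cfc, Unitary.conjStarAlgAut_apply]
  rfl

open Matrix ComplexOrder in
/-- Hayashi–Nagaoka inequality:
`I − (S+T)^{-1/2} S (S+T)^{-1/2} ≤ (1+c)(I−S) + (2+c+1/c)·T` in the Loewner order,
where the inverse square root is the generalized (Moore–Penrose) inverse square root,
realized via the hermitian functional calculus with `t ↦ 1/√t` (and `0 ↦ 0`). -/
theorem hayashi_nagaoka {n : Type*} [Fintype n] [DecidableEq n]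
    (S T : Matrix n n ℂ) (hS : S.PosSemidef) (hS1 : ((1 : Matrix n n ℂ) - S).PosSemidef)
    (hT : T.PosSemidef) (c : ℝ) (hc : 0 < c) :
    (((1 + c : ℝ) : ℂ) • ((1 : Matrix n n ℂ) - S) + ((2 + c + 1 / c : ℝ) : ℂ) • T
      - ((1 : Matrix n n ℂ)
          - hermCFC (fun t => if t = 0 then 0 else 1 / Real.sqrt t) (S + T) * S *
            hermCFC (fun t => if t = 0 then 0 else 1 / Real.sqrt t) (S + T))).PosSemidef := by
  open scoped Matrix.Norms.L2Operator MatrixOrder in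
  exact Matrix.nonneg_iff_posSemidef.mp <| sub_nonneg.mpr <| by
    simpa only [hermCFC_eq_cfc _ (hS.add hT).1, Real.ite_eq_zero_one_div_sqrt, Complex.coe_smul]
      using CStarAlgebra.hayashi_nagaoka hS.nonneg (sub_nonneg.mp hS1.nonneg) hT.nonneg
        ((S + T).finite_real_spectrum.continuousOn _) hc
end

section
/- (Minimax theorem) Let X and Y be convex compact subsets of finite-dimensional real vector spaces and f : X × Y → ℝ a continuous function which is convex in its first argument for each fixed y ∈ Y and concave in its second argument for each fixed x ∈ X. Then min_{x∈X} max_{y∈Y} f(x,y) = max_{y∈Y} min_{x∈X} f(x,y). -/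
open BigOperators

section MinimaxAux
open Set Filter

variable {E F : Type*} [NormedAddCommGroup E] [NormedSpace ℝ E]
  [NormedAddCommGroup F] [NormedSpace ℝ F]

/-- Komiya's two-point lemma. -/
lemma minimax_two_point {X : Set E} {Y : Set F}
    (hXne : X.Nonempty) (hXcomp : IsCompact X) (hYc : Convex ℝ Y)
    {f : E → F → ℝ}
    (hf : ContinuousOn (fun p : E × F => f p.1 p.2) (X ×ˢ Y))
    (hconv : ∀ y ∈ Y, ConvexOn ℝ X fun x => f x y)
    (hconc : ∀ x ∈ X, ConcaveOn ℝ Y fun y => f x y)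
    {y₁ y₂ : F} (hy₁ : y₁ ∈ Y) (hy₂ : y₂ ∈ Y) {α : ℝ}
    (hα : ∀ x ∈ X, α < max (f x y₁) (f x y₂)) :
    ∃ y ∈ Y, ∀ x ∈ X, α < f x y := by
  have hcx : ∀ y ∈ Y, ContinuousOn (fun x => f x y) X := fun y hy =>
    hf.comp ((continuous_id.prodMk continuous_const).continuousOn)
      (fun x hx => Set.mk_mem_prod hx hy)
  have hcy : ∀ x ∈ X, ContinuousOn (fun y => f x y) Y := fun x hx =>
    hf.comp ((continuous_const.prodMk continuous_id).continuousOn)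
      (fun y hy => Set.mk_mem_prod hx hy)
  by_contra hcon
  push_neg at hcon
  -- the min over X of the max, attained
  set g : E → ℝ := fun x => max (f x y₁) (f x y₂) with hg
  have hgc : ContinuousOn g X := (hcx y₁ hy₁).sup (hcx y₂ hy₂)
  have hgK : IsCompact (g '' X) := hXcomp.image_of_continuousOn hgc
  obtain ⟨x₀, hx₀X, hx₀⟩ := hgK.sInf_mem (hXne.image g)
  set m : ℝ := sInf (g '' X) with hm
  have hαm : α < m := hx₀ ▸ hα x₀ hx₀X
  set β : ℝ := (α + m) / 2 with hβ
  have hαβ : α < β := by rw [hβ]; linarith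
  have hβm : β < m := by rw [hβ]; linarith
  -- the segment
  set z : ℝ → F := fun t => (1 - t) • y₁ + t • y₂ with hzdef
  have hzY : ∀ t ∈ Icc (0:ℝ) 1, z t ∈ Y := fun t ht =>
    hYc hy₁ hy₂ (by linarith [ht.2]) ht.1 (by ring)
  have hzc : Continuous z := by fun_prop
  have hz0 : z 0 = y₁ := by simp [hzdef]
  have hz1 : z 1 = y₂ := by simp [hzdef]
  -- sublevel sets
  set C : ℝ → Set E := fun t => {x ∈ X | f x (z t) ≤ β} with hC
  have hCclosed : ∀ t ∈ Icc (0:ℝ) 1, IsClosed (C t) := fun t ht =>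
    (hcx (z t) (hzY t ht)).preimage_isClosed_of_isClosed hXcomp.isClosed isClosed_Iic
  have hCconv : ∀ t ∈ Icc (0:ℝ) 1, Convex ℝ (C t) := fun t ht =>
    (hconv (z t) (hzY t ht)).convex_le β
  have hCsubX : ∀ t, C t ⊆ X := fun t x hx => hx.1
  have hCne : ∀ t ∈ Icc (0:ℝ) 1, (C t).Nonempty := by
    intro t ht
    obtain ⟨x, hxX, hxle⟩ := hcon (z t) (hzY t ht)
    exact ⟨x, hxX, hxle.trans hαβ.le⟩
  have hCcover : ∀ t ∈ Icc (0:ℝ) 1, C t ⊆ C 0 ∪ C 1 := by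
    intro t ht x hx
    obtain ⟨hxX, hxle⟩ := hx
    have hcc := (hconc x hxX).2 hy₁ hy₂ (by linarith [ht.2] : (0:ℝ) ≤ 1 - t) ht.1 (by ring)
    simp only [smul_eq_mul] at hcc
    have h1 := mul_nonneg (by linarith [ht.2] : (0:ℝ) ≤ 1 - t)
      (sub_nonneg.2 (min_le_left (f x y₁) (f x y₂)))
    have h2 := mul_nonneg ht.1 (sub_nonneg.2 (min_le_right (f x y₁) (f x y₂)))
    have hmin : min (f x y₁) (f x y₂) ≤ β := by nlinarith
    rcases min_le_iff.1 hmin with h | h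
    · exact Or.inl ⟨hxX, by rwa [hz0]⟩
    · exact Or.inr ⟨hxX, by rwa [hz1]⟩
  have hdisj : Disjoint (C 0) (C 1) := by
    rw [Set.disjoint_left]
    rintro x ⟨hxX, hx0⟩ ⟨-, hx1⟩
    have : m ≤ g x := csInf_le hgK.bddBelow (Set.mem_image_of_mem g hxX)
    rw [hz0] at hx0; rw [hz1] at hx1
    have : g x ≤ β := max_le hx0 hx1
    linarith [csInf_le hgK.bddBelow (Set.mem_image_of_mem g hxX)]
  -- separate C 0 and C 1 by open sets
  have h01 : (0:ℝ) ∈ Icc (0:ℝ) 1 := by norm_num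
  have h11 : (1:ℝ) ∈ Icc (0:ℝ) 1 := by norm_num
  obtain ⟨U, V, hU, hV, hC0U, hC1V, hUV⟩ :=
    SeparatedNhds.of_isCompact_isCompact
      (hXcomp.of_isClosed_subset (hCclosed 0 h01) (hCsubX 0))
      (hXcomp.of_isClosed_subset (hCclosed 1 h11) (hCsubX 1)) hdisj
  have hor : ∀ t ∈ Icc (0:ℝ) 1, C t ⊆ C 0 ∨ C t ⊆ C 1 := by
    intro t ht
    have hpre := (hCconv t ht).isPreconnected
    rcases hpre.subset_or_subset hU hV hUV
        ((hCcover t ht).trans (Set.union_subset_union hC0U hC1V)) with h | h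
    · left; intro x hx
      rcases hCcover t ht hx with h' | h'
      · exact h'
      · exact absurd (h hx) (fun hxU => hUV.le_bot ⟨hxU, hC1V h'⟩)
    · right; intro x hx
      rcases hCcover t ht hx with h' | h'
      · exact absurd (h hx) (fun hxV => hUV.le_bot ⟨hC0U h', hxV⟩)
      · exact h'
  -- the two pieces of the segment
  set I : Set ℝ := {t ∈ Icc (0:ℝ) 1 | C t ⊆ C 0} with hI
  set J : Set ℝ := {t ∈ Icc (0:ℝ) 1 | C t ⊆ C 1} with hJ
  have hIJdisj : ∀ t, t ∈ I → t ∈ J → False := by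
    rintro t ⟨ht, h0⟩ ⟨-, h1⟩
    obtain ⟨x, hx⟩ := hCne t ht
    exact hdisj.le_bot ⟨h0 hx, h1 hx⟩
  -- closedness of both pieces
  have hkey : ∀ D : Set E, (∀ t ∈ Icc (0:ℝ) 1, C t ⊆ D ∨ Disjoint (C t) D) →
      IsClosed {t ∈ Icc (0:ℝ) 1 | C t ⊆ D} := by
    intro D hD
    apply IsSeqClosed.isClosed
    intro u t hu hut
    have htIcc : t ∈ Icc (0:ℝ) 1 :=
      isClosed_Icc.mem_of_tendsto hut (Filter.Eventually.of_forall fun n => (hu n).1)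
    obtain ⟨x, hxX, hxα⟩ := hcon (z t) (hzY t htIcc)
    have hxCt : x ∈ C t := ⟨hxX, hxα.trans hαβ.le⟩
    -- continuity of s ↦ f x (z s) along the segment
    have hcont : ContinuousOn (fun s => f x (z s)) (Icc (0:ℝ) 1) :=
      (hcy x hxX).comp hzc.continuousOn hzY
    have htend : Tendsto (fun n => f x (z (u n))) atTop (nhds (f x (z t))) := by
      refine ((hcont t htIcc).tendsto).comp ?_
      exact tendsto_nhdsWithin_of_tendsto_nhds_of_eventually_within u hut
        (Filter.Eventually.of_forall fun n => (hu n).1)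
    have hev : ∀ᶠ n in atTop, f x (z (u n)) < β :=
      htend.eventually_lt_const (lt_of_le_of_lt hxα hαβ)
    obtain ⟨n, hn⟩ := hev.exists
    have hxD : x ∈ D := (hu n).2 ⟨hxX, hn.le⟩
    refine ⟨htIcc, ?_⟩
    rcases hD t htIcc with h | h
    · exact h
    · exact absurd (h.le_bot ⟨hxCt, hxD⟩) (by simp)
  have hIc : IsClosed I := hkey (C 0) (fun t ht => (hor t ht).imp id
    (fun h => Set.disjoint_left.2 fun x hx hx0 => hdisj.le_bot ⟨hx0, h hx⟩))
  have hJc : IsClosed J := hkey (C 1) (fun t ht => (hor t ht).symm.imp id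
    (fun h => Set.disjoint_left.2 fun x hx hx1 => hdisj.le_bot ⟨h hx, hx1⟩))
  -- contradiction with connectedness of the segment
  have h0I : (0:ℝ) ∈ I := ⟨h01, by rfl⟩
  have h1J : (1:ℝ) ∈ J := ⟨h11, by rfl⟩
  obtain ⟨t, htIcc, htJ, htI⟩ := isPreconnected_Icc (u := Jᶜ) (v := Iᶜ)
    hJc.isOpen_compl hIc.isOpen_compl
    (fun t ht => by
      by_cases hI' : t ∈ I
      · exact Or.inl (fun hJ' => hIJdisj t hI' hJ')
      · exact Or.inr hI')
    ⟨0, h01, fun hJ' => hIJdisj 0 h0I hJ'⟩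
    ⟨1, h11, fun hI' => hIJdisj 1 hI' h1J⟩
  rcases hor t htIcc with h | h
  · exact htI ⟨htIcc, h⟩
  · exact htJ ⟨htIcc, h⟩

/-- Komiya's finite lemma. -/
lemma minimax_finite {Y : Set F} (hYc : Convex ℝ Y) {f : E → F → ℝ}
    (s : Finset F) (hs : s.Nonempty) :
    ∀ X : Set E, X.Nonempty → IsCompact X →
      ContinuousOn (fun p : E × F => f p.1 p.2) (X ×ˢ Y) →
      (∀ y ∈ Y, ConvexOn ℝ X fun x => f x y) →
      (∀ x ∈ X, ConcaveOn ℝ Y fun y => f x y) →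
      ∀ α : ℝ, ↑s ⊆ Y → (∀ x ∈ X, ∃ y ∈ s, α < f x y) →
      ∃ y ∈ Y, ∀ x ∈ X, α < f x y := by
  induction hs using Finset.Nonempty.cons_induction with
  | singleton y₀ =>
    intro X hXne hXcomp hf hconv hconc α hsY hpt
    refine ⟨y₀, hsY (by simp), fun x hx => ?_⟩
    obtain ⟨y, hy, hlt⟩ := hpt x hx
    simp only [Finset.mem_singleton] at hy
    rwa [hy] at hlt
  | cons y₀ s' hy₀s' hs' IH =>
    intro X hXne hXcomp hf hconv hconc α hsY hpt
    have hcx : ∀ y ∈ Y, ContinuousOn (fun x => f x y) X := fun y hy =>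
      hf.comp ((continuous_id.prodMk continuous_const).continuousOn)
        (fun x hx => Set.mk_mem_prod hx hy)
    have hy₀Y : y₀ ∈ Y := hsY (by simp)
    have hs'Y : ↑s' ⊆ Y := fun y hy => hsY (by simp [hy])
    have hne : (Finset.cons y₀ s' hy₀s').Nonempty := ⟨y₀, by simp⟩
    -- min over X of the max over the finite set, attained
    set G : E → ℝ := fun x => (Finset.cons y₀ s' hy₀s').sup' hne (fun y => f x y) with hG
    have hGc : ContinuousOn G X :=
      ContinuousOn.finset_sup'_apply hne (fun y hy => hcx y (hsY hy))
    have hGK : IsCompact (G '' X) := hXcomp.image_of_continuousOn hGc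
    obtain ⟨x₀, hx₀X, hx₀⟩ := hGK.sInf_mem (hXne.image G)
    set M : ℝ := sInf (G '' X) with hM
    have hαM : α < M := by
      rw [← hx₀]
      obtain ⟨y, hy, hlt⟩ := hpt x₀ hx₀X
      exact hlt.trans_le (Finset.le_sup' (fun y => f x₀ y) hy)
    set β : ℝ := (α + M) / 2 with hβ
    have hαβ : α < β := by rw [hβ]; linarith
    have hβM : β < M := by rw [hβ]; linarith
    have hMle : ∀ x ∈ X, M ≤ G x := fun x hx =>
      csInf_le hGK.bddBelow (Set.mem_image_of_mem G hx)
    set X₀ : Set E := {x ∈ X | f x y₀ ≤ β} with hX₀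
    by_cases hX₀ne : X₀.Nonempty
    · -- X₀ nonempty: apply induction hypothesis on X₀
      have hX₀sub : X₀ ⊆ X := fun x hx => hx.1
      have hX₀comp : IsCompact X₀ :=
        hXcomp.of_isClosed_subset
          ((hcx y₀ hy₀Y).preimage_isClosed_of_isClosed hXcomp.isClosed isClosed_Iic) hX₀sub
      have hX₀conv : Convex ℝ X₀ := (hconv y₀ hy₀Y).convex_le β
      have hpt' : ∀ x ∈ X₀, ∃ y ∈ s', β < f x y := by
        rintro x ⟨hxX, hxy₀⟩
        have hGx : β < (Finset.cons y₀ s' hy₀s').sup' hne (fun y => f x y) :=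
          hβM.trans_le (hMle x hxX)
        rw [Finset.sup'_cons hs'] at hGx
        rcases lt_max_iff.1 hGx with h | h
        · exact absurd h (not_lt.2 hxy₀)
        · exact (Finset.lt_sup'_iff hs').1 h
      obtain ⟨y', hy'Y, hy'⟩ := IH X₀ hX₀ne hX₀comp
        (hf.mono (Set.prod_mono hX₀sub subset_rfl))
        (fun y hy => (hconv y hy).subset hX₀sub hX₀conv)
        (fun x hx => hconc x (hX₀sub hx)) β hs'Y
        (by simpa using hpt')
      have hmax : ∀ x ∈ X, α < max (f x y') (f x y₀) := by
        intro x hx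
        by_cases hle : f x y₀ ≤ β
        · exact lt_max_of_lt_left (hαβ.trans (hy' x ⟨hx, hle⟩))
        · exact lt_max_of_lt_right (hαβ.trans (not_le.1 hle))
      exact minimax_two_point hXne hXcomp hYc hf hconv hconc hy'Y hy₀Y hmax
    · -- X₀ empty: y₀ itself works
      refine ⟨y₀, hy₀Y, fun x hx => ?_⟩
      by_contra hle
      exact hX₀ne ⟨x, hx, by linarith [not_lt.1 hle]⟩

theorem minimax' {X : Set E} {Y : Set F} (hXne : X.Nonempty) (hYne : Y.Nonempty)
    (hXc : Convex ℝ X) (hYc : Convex ℝ Y) (hXcomp : IsCompact X) (hYcomp : IsCompact Y)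
    (f : E → F → ℝ) (hf : ContinuousOn (fun p : E × F => f p.1 p.2) (X ×ˢ Y))
    (hconv : ∀ y ∈ Y, ConvexOn ℝ X (fun x => f x y))
    (hconc : ∀ x ∈ X, ConcaveOn ℝ Y (fun y => f x y)) :
    sInf ((fun x => sSup ((fun y => f x y) '' Y)) '' X)
      = sSup ((fun y => sInf ((fun x => f x y) '' X)) '' Y) := by
  have hcx : ∀ y ∈ Y, ContinuousOn (fun x => f x y) X := fun y hy =>
    hf.comp ((continuous_id.prodMk continuous_const).continuousOn)
      (fun x hx => Set.mk_mem_prod hx hy)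
  have hcy : ∀ x ∈ X, ContinuousOn (fun y => f x y) Y := fun x hx =>
    hf.comp ((continuous_const.prodMk continuous_id).continuousOn)
      (fun y hy => Set.mk_mem_prod hx hy)
  set gsup : E → ℝ := fun x => sSup ((fun y => f x y) '' Y) with hgsup
  set ginf : F → ℝ := fun y => sInf ((fun x => f x y) '' X) with hginf
  -- compactness of slices
  have hKy : ∀ x ∈ X, IsCompact ((fun y => f x y) '' Y) := fun x hx =>
    hYcomp.image_of_continuousOn (hcy x hx)
  have hKx : ∀ y ∈ Y, IsCompact ((fun x => f x y) '' X) := fun y hy =>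
    hXcomp.image_of_continuousOn (hcx y hy)
  -- gsup attained; pointwise bounds
  have hgsup_attain : ∀ x ∈ X, ∃ y ∈ Y, gsup x = f x y := by
    intro x hx
    obtain ⟨y, hy, hyeq⟩ := (hKy x hx).sSup_mem (hYne.image _)
    exact ⟨y, hy, hyeq.symm⟩
  have hginf_attain : ∀ y ∈ Y, ∃ x ∈ X, ginf y = f x y := by
    intro y hy
    obtain ⟨x, hx, hxeq⟩ := (hKx y hy).sInf_mem (hXne.image _)
    exact ⟨x, hx, hxeq.symm⟩
  have hle_gsup : ∀ x ∈ X, ∀ y ∈ Y, f x y ≤ gsup x := fun x hx y hy =>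
    le_csSup (hKy x hx).bddAbove (Set.mem_image_of_mem _ hy)
  have hginf_le : ∀ y ∈ Y, ∀ x ∈ X, ginf y ≤ f x y := fun y hy x hx =>
    csInf_le (hKx y hy).bddBelow (Set.mem_image_of_mem _ hx)
  -- global bounds on f over the compact product, giving bddness of outer images
  obtain ⟨pmin, hpmin, hpminle⟩ := (hXcomp.prod hYcomp).exists_isMinOn
    (hXne.prod hYne) hf
  obtain ⟨pmax, hpmax, hpmaxle⟩ := (hXcomp.prod hYcomp).exists_isMaxOn
    (hXne.prod hYne) hf
  have hbddB : BddBelow (gsup '' X) := by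
    refine ⟨f pmin.1 pmin.2, ?_⟩
    rintro - ⟨x, hx, rfl⟩
    obtain ⟨y, hy, hyeq⟩ := hgsup_attain x hx
    rw [hyeq]
    exact hpminle (Set.mk_mem_prod hx hy)
  have hbddA : BddAbove (ginf '' Y) := by
    refine ⟨f pmax.1 pmax.2, ?_⟩
    rintro - ⟨y, hy, rfl⟩
    obtain ⟨x, hx, hxeq⟩ := hginf_attain y hy
    rw [hxeq]
    exact hpmaxle (Set.mk_mem_prod hx hy)
  set L : ℝ := sInf (gsup '' X) with hL
  set R : ℝ := sSup (ginf '' Y) with hR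
  -- easy direction : R ≤ L
  have hRL : R ≤ L := by
    apply csSup_le (hYne.image _)
    rintro - ⟨y, hy, rfl⟩
    apply le_csInf (hXne.image _)
    rintro - ⟨x, hx, rfl⟩
    exact (hginf_le y hy x hx).trans (hle_gsup x hx y hy)
  -- hard direction : L ≤ R
  refine le_antisymm ?_ hRL
  by_contra hcon
  push_neg at hcon
  -- for each x there is y with R < f x y
  have hXgt : ∀ x ∈ X, ∃ y ∈ Y, R < f x y := by
    intro x hx
    have h1 : L ≤ gsup x := csInf_le hbddB (Set.mem_image_of_mem _ hx)
    obtain ⟨y, hy, hyeq⟩ := hgsup_attain x hx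
    exact ⟨y, hy, by rw [← hyeq]; exact hcon.trans_le h1⟩
  -- compactness: finitely many y suffice
  set Z : Y → Set E := fun y => X ∩ (fun x => f x (y : F)) ⁻¹' Iic R with hZ
  have hZclosed : ∀ y : Y, IsClosed (Z y) := fun y =>
    (hcx y y.2).preimage_isClosed_of_isClosed hXcomp.isClosed isClosed_Iic
  have hZempty : (X ∩ ⋂ y : Y, Z y) = ∅ := by
    rw [Set.eq_empty_iff_forall_notMem]
    rintro x ⟨hxX, hxZ⟩
    obtain ⟨y, hy, hlt⟩ := hXgt x hxX
    have := Set.mem_iInter.1 hxZ ⟨y, hy⟩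
    exact absurd this.2 (not_le.2 hlt)
  obtain ⟨t, ht⟩ := hXcomp.elim_finite_subfamily_closed Z hZclosed hZempty
  classical
  set s : Finset F := t.image Subtype.val with hsdef
  have hsY : ↑s ⊆ Y := by
    intro y hy
    simp only [hsdef, Finset.coe_image, Set.mem_image, Finset.mem_coe] at hy
    obtain ⟨y', -, rfl⟩ := hy
    exact y'.2
  have hpt : ∀ x ∈ X, ∃ y ∈ s, R < f x y := by
    intro x hx
    by_contra hno
    push_neg at hno
    apply (Set.eq_empty_iff_forall_notMem.1 ht x)
    refine ⟨hx, Set.mem_iInter₂.2 fun y hy => ⟨hx, ?_⟩⟩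
    exact hno (y : F) (by simp only [hsdef]; exact Finset.mem_image_of_mem _ hy)
  have hsne : s.Nonempty := by
    obtain ⟨x, hx⟩ := hXne
    obtain ⟨y, hy, -⟩ := hpt x hx
    exact ⟨y, hy⟩
  obtain ⟨y, hyY, hgt⟩ := minimax_finite hYc s hsne X hXne hXcomp hf hconv hconc R hsY hpt
  -- contradiction: ginf y > R but ginf y ≤ R
  obtain ⟨x₀, hx₀, hx₀eq⟩ := hginf_attain y hyY
  have h1 : R < ginf y := hx₀eq ▸ hgt x₀ hx₀
  have h2 : ginf y ≤ R := le_csSup hbddA (Set.mem_image_of_mem _ hyY)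
  exact absurd h1 (not_lt.2 h2)

end MinimaxAux

/-- Minimax theorem: for nonempty convex compact sets `X`, `Y` in finite-dimensional real
normed spaces and a continuous function `f` on `X × Y`, convex in the first argument and
concave in the second, `min_x max_y f = max_y min_x f`. -/
theorem minimax {E F : Type*} [NormedAddCommGroup E] [NormedSpace ℝ E]
    [FiniteDimensional ℝ E] [NormedAddCommGroup F] [NormedSpace ℝ F]
    [FiniteDimensional ℝ F]
    (X : Set E) (Y : Set F) (hXne : X.Nonempty) (hYne : Y.Nonempty)
    (hXc : Convex ℝ X) (hYc : Convex ℝ Y) (hXcomp : IsCompact X) (hYcomp : IsCompact Y)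
    (f : E → F → ℝ) (hf : ContinuousOn (fun p : E × F => f p.1 p.2) (X ×ˢ Y))
    (hconv : ∀ y ∈ Y, ConvexOn ℝ X (fun x => f x y))
    (hconc : ∀ x ∈ X, ConcaveOn ℝ Y (fun y => f x y)) :
    sInf ((fun x => sSup ((fun y => f x y) '' Y)) '' X)
      = sSup ((fun y => sInf ((fun x => f x y) '' X)) '' Y) :=
  minimax' hXne hYne hXc hYc hXcomp hYcomp f hf hconv hconc
end
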